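/- The identity ∑_{n_1,n_2,n_3≥0} q^{(9n_3²+5n_3)/2 + 2n_2² + n_2 + n_1² + 6n_3n_2 + 3n_3n_1 + 2n_2n_1} (−q;q²)_{n_2} x^{3n_3+2n_2+n_1} / ((q;q)_{n_1}(q²;q²)_{n_2}(q³;q³)_{n_3}) = ∑_{n_1,m_2,n_3,m_4≥0} q^{8m_4²+2m_4 + (9n_3²+5n_3)/2 + (5m_2²+m_2)/2 + n_1² + 12m_4n_3 + 8m_4m_2 + 4m_4n_1 + 6n_3m_2 + 3n_3n_1 + 2m_2n_1} x^{4m_4+3n_3+2m_2+n_1} / ((q;q)_{n_1}(q;q)_{m_2}(q³;q³)_{n_3}(q⁴;q⁴)_{m_4}) holds as formal power series in q and x. -/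

import Mathlib

open Finset PowerSeries

/-- `l` is a partition of `n`: a nondecreasing list of positive integers summing to `n`. -/
def IsPartitionOf (n : ℕ) (l : List ℕ) : Prop :=
  l.Pairwise (· ≤ ·) ∧ (∀ x ∈ l, 0 < x) ∧ l.sum = n

/-- `l` has difference at least `k` at distance `d`. -/
def DiffCond (k d : ℕ) (l : List ℕ) : Prop :=
  ∀ (j : ℕ) (h : j + d < l.length), l[j]'(by omega) + k ≤ l[j + d]'h

/-- If two successive parts differ by at most one, then their sum is ≡ `r` (mod 3). -/
def SumCond2 (r : ℕ) (l : List ℕ) : Prop :=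
  ∀ (j : ℕ) (h : j + 1 < l.length),
    l[j + 1]'h ≤ l[j]'(by omega) + 1 → (l[j]'(by omega) + l[j + 1]'h) % 3 = r

/-- If parts at distance two differ by at most one, then their sum, together with the
intermediate part, is ≡ `r` (mod 3). -/
def SumCond3 (r : ℕ) (l : List ℕ) : Prop :=
  ∀ (j : ℕ) (h : j + 2 < l.length),
    l[j + 2]'h ≤ l[j]'(by omega) + 1 →
      (l[j]'(by omega) + l[j + 1]'(by omega) + l[j + 2]'h) % 3 = r

/-- `(q; q)_n` as a formal power series in `q = X`. -/
noncomputable def qq (n : ℕ) : PowerSeries ℚ :=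
  ∏ j ∈ Finset.range n, (1 - (X : PowerSeries ℚ) ^ (j + 1))

/-- `(q^2; q^2)_n`. -/
noncomputable def qsq (n : ℕ) : PowerSeries ℚ :=
  ∏ j ∈ Finset.range n, (1 - (X : PowerSeries ℚ) ^ (2 * (j + 1)))

/-- `(q^3; q^3)_n`. -/
noncomputable def qcube (n : ℕ) : PowerSeries ℚ :=
  ∏ j ∈ Finset.range n, (1 - (X : PowerSeries ℚ) ^ (3 * (j + 1)))

/-- `(q^4; q^4)_n`. -/
noncomputable def qfour (n : ℕ) : PowerSeries ℚ :=
  ∏ j ∈ Finset.range n, (1 - (X : PowerSeries ℚ) ^ (4 * (j + 1)))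

/-- `(-q; q^2)_n`. -/
noncomputable def nqodd (n : ℕ) : PowerSeries ℚ :=
  ∏ j ∈ Finset.range n, (1 + (X : PowerSeries ℚ) ^ (2 * j + 1))

/-! Expanding `(-q; q²)_N / (q²; q²)_N = ∑_{a + 2b = N} A a * B b`, where
`A a = q^(a choose 2) / (q; q)_a` and `B b = 1 / (q⁴; q⁴)_b`, inside the triple sum and writing
`n₂ = m₂ + 2 m₄` gives the quadruple sum term by term. The expansion holds because both sides
equal `1` at `N = 0` and satisfy `(1 - q^(2N+2)) F (N+1) = (1 + q^(2N+1)) F N`: on the right, split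
`1 - q^(2a+4b) = (1 - q^a)(1 + q^(a+4b)) + q^a (1 - q^(4b))` and lower `a`, resp. `b`, by one via
`(1 - q^a) A a = q^(a-1) A (a-1)` and `(1 - q^(4b)) B b = B (b-1)`. -/

def weightedAntidiagonal (N : ℕ) : Finset (ℕ × ℕ) :=
  (range (N + 1) ×ˢ range (N + 1)).filter fun p => p.1 + 2 * p.2 = N

@[simp]
lemma mem_weightedAntidiagonal {N : ℕ} {p : ℕ × ℕ} :
    p ∈ weightedAntidiagonal N ↔ p.1 + 2 * p.2 = N := by
  simp only [weightedAntidiagonal, mem_filter, mem_product, mem_range]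
  omega

section Shift

variable {M : Type*} [AddCommMonoid M] {g : ℕ × ℕ → M}

lemma sum_weightedAntidiagonal_succ (hg : ∀ b, g (0, b) = 0) (N : ℕ) :
    ∑ p ∈ weightedAntidiagonal (N + 1), g p =
      ∑ p ∈ weightedAntidiagonal N, g (p.1 + 1, p.2) := by
  refine (sum_of_injOn (fun p : ℕ × ℕ => (p.1 + 1, p.2)) ?_ ?_ ?_ fun _ _ => rfl).symm
  · rintro ⟨a, b⟩ - ⟨a', b'⟩ - h
    simp_all
  · rintro ⟨a, b⟩ h
    simp_all; omega
  · rintro ⟨a, b⟩ hab h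
    cases a with
    | zero => exact hg b
    | succ a => exact absurd ⟨(a, b), by simp_all; omega, rfl⟩ h

lemma sum_weightedAntidiagonal_add_two (hg : ∀ a, g (a, 0) = 0) (N : ℕ) :
    ∑ p ∈ weightedAntidiagonal (N + 2), g p =
      ∑ p ∈ weightedAntidiagonal N, g (p.1, p.2 + 1) := by
  refine (sum_of_injOn (fun p : ℕ × ℕ => (p.1, p.2 + 1)) ?_ ?_ ?_ fun _ _ => rfl).symm
  · rintro ⟨a, b⟩ - ⟨a', b'⟩ - h
    simp_all
  · rintro ⟨a, b⟩ h
    simp_all; omega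
  · rintro ⟨a, b⟩ hab h
    cases b with
    | zero => exact hg a
    | succ b => exact absurd ⟨(a, b), by simp_all; omega, rfl⟩ h

end Shift

section Convolution

variable {R : Type*} [CommRing R]

def weightedConvolution (A B : ℕ → R) (N : ℕ) : R :=
  ∑ p ∈ weightedAntidiagonal N, A p.1 * B p.2

variable (q : R) {A B : ℕ → R}

lemma weightedConvolution_succ (hA : ∀ a, (1 - q ^ (a + 1)) * A (a + 1) = q ^ a * A a)
    (N : ℕ) :
    weightedConvolution A B (N + 1) =
      weightedConvolution (fun a => q ^ a * A a) B (N + 1) +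
        weightedConvolution (fun a => q ^ a * A a) B N := by
  have hshift := sum_weightedAntidiagonal_succ
    (g := fun p => (1 - q ^ p.1) * A p.1 * B p.2) (by simp) N
  rw [weightedConvolution, weightedConvolution, weightedConvolution, ← sub_eq_iff_eq_add',
    ← sum_sub_distrib]
  simp only [hA] at hshift
  rw [← hshift]
  exact sum_congr rfl fun p _ => by ring

lemma one_sub_pow_mul_weightedConvolution_succ
    (hA : ∀ a, (1 - q ^ (a + 1)) * A (a + 1) = q ^ a * A a)
    (hB : ∀ b, (1 - q ^ (4 * (b + 1))) * B (b + 1) = B b) (N : ℕ) :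
    (1 - q ^ (2 * N + 2)) * weightedConvolution A B (N + 1) =
      (1 + q ^ (2 * N + 1)) * weightedConvolution A B N := by
  cases N with
  | zero =>
    have h01 : weightedAntidiagonal 1 = {(1, 0)} := by decide
    have h00 : weightedAntidiagonal 0 = {(0, 0)} := by decide
    simp only [weightedConvolution, h01, h00, sum_singleton]
    linear_combination (1 + q) * B 0 * hA 0
  | succ N =>
    have hsplit : ∀ p ∈ weightedAntidiagonal (N + 2),
        (1 - q ^ (2 * (N + 1) + 2)) * (A p.1 * B p.2) =
          (1 - q ^ p.1) * (1 + q ^ (p.1 + 4 * p.2)) * A p.1 * B p.2 +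
            q ^ p.1 * A p.1 * ((1 - q ^ (4 * p.2)) * B p.2) := by
      intro p hp
      rw [mem_weightedAntidiagonal] at hp
      rw [show 2 * (N + 1) + 2 = p.1 + (p.1 + 4 * p.2) by omega, pow_add]
      ring
    have hshiftA := sum_weightedAntidiagonal_succ
      (g := fun p => (1 - q ^ p.1) * (1 + q ^ (p.1 + 4 * p.2)) * A p.1 * B p.2) (by simp) (N + 1)
    have hshiftB := sum_weightedAntidiagonal_add_two
      (g := fun p => q ^ p.1 * A p.1 * ((1 - q ^ (4 * p.2)) * B p.2)) (by simp) N
    have hsumA : ∑ p ∈ weightedAntidiagonal (N + 1),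
        (1 - q ^ (p.1 + 1)) * (1 + q ^ (p.1 + 1 + 4 * p.2)) * A (p.1 + 1) * B p.2 =
          weightedConvolution (fun a => q ^ a * A a) B (N + 1) +
            q ^ (2 * N + 3) * weightedConvolution A B (N + 1) := by
      rw [weightedConvolution, weightedConvolution, mul_sum, ← sum_add_distrib]
      refine sum_congr rfl fun p hp => ?_
      rw [mem_weightedAntidiagonal] at hp
      rw [show 2 * N + 3 = p.1 + (p.1 + 1 + 4 * p.2) by omega, pow_add]
      linear_combination (1 + q ^ (p.1 + 1 + 4 * p.2)) * B p.2 * hA p.1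
    have hsumB : ∑ p ∈ weightedAntidiagonal N,
        q ^ p.1 * A p.1 * ((1 - q ^ (4 * (p.2 + 1))) * B (p.2 + 1)) =
          weightedConvolution (fun a => q ^ a * A a) B N := by
      simp only [hB]
      rfl
    rw [weightedConvolution, mul_sum, sum_congr rfl hsplit, sum_add_distrib, hshiftA, hshiftB,
      hsumA, hsumB, weightedConvolution_succ q hA N]
    ring

end Convolution

section PowerSeries

variable {k : Type*} [Field k]

lemma constantCoeff_one_sub_X_pow {n : ℕ} (hn : n ≠ 0) :
    constantCoeff (1 - (X : PowerSeries k) ^ n) = 1 := by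
  simp [zero_pow hn]

lemma one_sub_X_pow_ne_zero {n : ℕ} (hn : n ≠ 0) : (1 - (X : PowerSeries k) ^ n) ≠ 0 :=
  fun h => by simpa [h] using constantCoeff_one_sub_X_pow (k := k) hn

lemma one_sub_X_pow_mul_inv_mul_one_sub_X_pow {n : ℕ} (hn : n ≠ 0) (φ : PowerSeries k) :
    (1 - X ^ n) * (φ * (1 - X ^ n))⁻¹ = φ⁻¹ := by
  rw [PowerSeries.mul_inv_rev, ← mul_assoc, PowerSeries.mul_inv_cancel _
    (by rw [constantCoeff_one_sub_X_pow hn]; exact one_ne_zero), one_mul]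

end PowerSeries

lemma one_sub_X_pow_mul_qq_succ_inv (a : ℕ) :
    (1 - X ^ (a + 1)) * (X ^ (a + 1).choose 2 * (qq (a + 1))⁻¹) =
      X ^ a * (X ^ a.choose 2 * (qq a)⁻¹) := by
  rw [qq, prod_range_succ, ← qq, Nat.choose_succ_succ', Nat.choose_one_right, mul_left_comm,
    one_sub_X_pow_mul_inv_mul_one_sub_X_pow (by omega), pow_add, mul_assoc]

lemma one_sub_X_pow_mul_qfour_succ_inv (b : ℕ) :
    (1 - X ^ (4 * (b + 1))) * (qfour (b + 1))⁻¹ = (qfour b)⁻¹ := by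
  rw [qfour, prod_range_succ, ← qfour]
  exact one_sub_X_pow_mul_inv_mul_one_sub_X_pow (by omega) _

lemma one_sub_X_pow_mul_nqodd_mul_qsq_inv_succ (N : ℕ) :
    (1 - X ^ (2 * N + 2)) * (nqodd (N + 1) * (qsq (N + 1))⁻¹) =
      (1 + X ^ (2 * N + 1)) * (nqodd N * (qsq N)⁻¹) := by
  rw [nqodd, qsq, prod_range_succ, prod_range_succ, ← nqodd, ← qsq,
    show 2 * (N + 1) = 2 * N + 2 by ring,
    ← one_sub_X_pow_mul_inv_mul_one_sub_X_pow (by omega : 2 * N + 2 ≠ 0) (qsq N)]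
  ring

theorem nqodd_mul_qsq_inv (N : ℕ) :
    nqodd N * (qsq N)⁻¹ =
      weightedConvolution (fun a => X ^ a.choose 2 * (qq a)⁻¹) (fun b => (qfour b)⁻¹) N := by
  induction N with
  | zero =>
    have h00 : weightedAntidiagonal 0 = {(0, 0)} := by decide
    simp [weightedConvolution, h00, nqodd, qsq, qq, qfour]
  | succ N ih =>
    apply mul_left_cancel₀ (one_sub_X_pow_ne_zero (by omega : 2 * N + 2 ≠ 0))
    rw [one_sub_X_pow_mul_nqodd_mul_qsq_inv_succ, ih,
      one_sub_pow_mul_weightedConvolution_succ X one_sub_X_pow_mul_qq_succ_inv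
        one_sub_X_pow_mul_qfour_succ_inv]

lemma two_mul_choose_two_add_self (a : ℕ) : 2 * a.choose 2 + a = a ^ 2 := by
  induction a with
  | zero => rfl
  | succ a ih =>
    rw [Nat.choose_succ_succ', Nat.choose_one_right]
    linear_combination ih

lemma kr5_exponent_add_choose_two (n₁ m₂ n₃ m₄ : ℕ) :
    (9 * n₃ ^ 2 + 5 * n₃) / 2 + 2 * (m₂ + 2 * m₄) ^ 2 + (m₂ + 2 * m₄) + n₁ ^ 2 +
        6 * n₃ * (m₂ + 2 * m₄) + 3 * n₃ * n₁ + 2 * (m₂ + 2 * m₄) * n₁ + m₂.choose 2 =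
      8 * m₄ ^ 2 + 2 * m₄ + (9 * n₃ ^ 2 + 5 * n₃) / 2 + (5 * m₂ ^ 2 + m₂) / 2 + n₁ ^ 2 +
        12 * m₄ * n₃ + 8 * m₄ * m₂ + 4 * m₄ * n₁ + 6 * n₃ * m₂ + 3 * n₃ * n₁ + 2 * m₂ * n₁ := by
  have h := two_mul_choose_two_add_self m₂
  rw [show (5 * m₂ ^ 2 + m₂) / 2 = 2 * m₂ ^ 2 + m₂ + m₂.choose 2 by omega]
  ring

lemma sum_sum_weightedAntidiagonal {M : Type*} [AddCommMonoid M] (m : ℕ)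
    (f : ℕ × ℕ × ℕ × ℕ → M) :
    ∑ p ∈ (range (m + 1) ×ˢ range (m + 1) ×ˢ range (m + 1)).filter
          (fun p => p.1 + 2 * p.2.1 + 3 * p.2.2 = m),
        ∑ r ∈ weightedAntidiagonal p.2.1, f (p.1, r.1, p.2.2, r.2) =
      ∑ p ∈ (range (m + 1) ×ˢ range (m + 1) ×ˢ range (m + 1) ×ˢ range (m + 1)).filter
          (fun p => p.1 + 2 * p.2.1 + 3 * p.2.2.1 + 4 * p.2.2.2 = m), f p := by
  rw [sum_sigma']
  refine sum_nbij' (fun x => (x.1.1, x.2.1, x.1.2.2, x.2.2))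
    (fun p => ⟨(p.1, p.2.1 + 2 * p.2.2.2, p.2.2.1), (p.2.1, p.2.2.2)⟩) ?_ ?_ ?_ ?_ ?_
  · rintro ⟨⟨a, b, c⟩, ⟨d, e⟩⟩ h
    simp only [mem_sigma, mem_filter, mem_product, mem_range, mem_weightedAntidiagonal] at h ⊢
    omega
  · rintro ⟨a, b, c, d⟩ h
    simp only [mem_sigma, mem_filter, mem_product, mem_range, mem_weightedAntidiagonal,
      and_true] at h ⊢
    omega
  · rintro ⟨⟨a, b, c⟩, ⟨d, e⟩⟩ h
    simp_all
  · rintro ⟨a, b, c, d⟩ -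
    rfl
  · rintro ⟨⟨a, b, c⟩, ⟨d, e⟩⟩ -
    rfl

/-- The coefficient of `q^n x^m` on both sides, with `p = (n₁, n₂, n₃)`, resp.
`p = (n₁, m₂, n₃, m₄)`. -/
theorem kr5_alternative_series (n m : ℕ) :
    (∑ p ∈ (Finset.range (m + 1) ×ˢ Finset.range (m + 1) ×ˢ Finset.range (m + 1)).filter
          (fun p => p.1 + 2 * p.2.1 + 3 * p.2.2 = m),
        PowerSeries.coeff n
          ((X : PowerSeries ℚ) ^
              ((9 * p.2.2 ^ 2 + 5 * p.2.2) / 2 + 2 * p.2.1 ^ 2 + p.2.1 + p.1 ^ 2 +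
                6 * p.2.2 * p.2.1 + 3 * p.2.2 * p.1 + 2 * p.2.1 * p.1) *
            nqodd p.2.1 * (qq p.1 * qsq p.2.1 * qcube p.2.2)⁻¹)) =
      ∑ p ∈ (Finset.range (m + 1) ×ˢ Finset.range (m + 1) ×ˢ Finset.range (m + 1) ×ˢ
            Finset.range (m + 1)).filter
          (fun p => p.1 + 2 * p.2.1 + 3 * p.2.2.1 + 4 * p.2.2.2 = m),
        PowerSeries.coeff n
          ((X : PowerSeries ℚ) ^
              (8 * p.2.2.2 ^ 2 + 2 * p.2.2.2 + (9 * p.2.2.1 ^ 2 + 5 * p.2.2.1) / 2 +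
                (5 * p.2.1 ^ 2 + p.2.1) / 2 + p.1 ^ 2 +
                12 * p.2.2.2 * p.2.2.1 + 8 * p.2.2.2 * p.2.1 + 4 * p.2.2.2 * p.1 +
                6 * p.2.2.1 * p.2.1 + 3 * p.2.2.1 * p.1 + 2 * p.2.1 * p.1) *
            (qq p.1 * qq p.2.1 * qcube p.2.2.1 * qfour p.2.2.2)⁻¹) := by
  simp only [← map_sum]
  congr 1
  rw [← sum_sum_weightedAntidiagonal]
  refine sum_congr rfl fun ⟨n₁, n₂, n₃⟩ _ => ?_
  rw [show qq n₁ * qsq n₂ * qcube n₃ = qq n₁ * qcube n₃ * qsq n₂ by ring, mul_assoc,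
    PowerSeries.mul_inv_rev (qq n₁ * qcube n₃), ← mul_assoc (nqodd n₂), nqodd_mul_qsq_inv,
    weightedConvolution, sum_mul, mul_sum]
  refine sum_congr rfl fun ⟨a, b⟩ hab => ?_
  rw [mem_weightedAntidiagonal] at hab
  subst hab
  dsimp only
  rw [← kr5_exponent_add_choose_two, pow_add]
  simp only [PowerSeries.mul_inv_rev]
  ring
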